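/- arXiv:1202.5813 — 5 statements merged into one kernel-verified Lean document; each statement's English description precedes it below -/
import Mathlib

section
/- Suppose f_j ∈ H(X) for all j ∈ ω, f_j⁻¹ → f⁻¹ pointwise where f ∈ H(X), and for all ε > 0 there is δ > 0 such that for all open U and all j, μ(U) < δ implies μ(f_j(U)) < ε. Then f is absolutely continuous. -/
/-!
A point `x ∈ f '' U` has `f⁻¹ x ∈ U` with `U` open, so `f_j⁻¹ x ∈ U`, i.e. `x ∈ f_j '' U`, for all
large `j`. Hence `f '' U ⊆ liminf_j (f_j '' U)`, and the measure of a liminf of sets is bounded by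
any uniform bound on the measures of the sets, which the uniform absolute continuity provides.
-/

open MeasureTheory Filter Topology ENNReal

theorem MeasureTheory.measure_liminf_atTop_le {α : Type*} [MeasurableSpace α] (μ : Measure α)
    {s : ℕ → Set α} {c : ℝ≥0∞} (hs : ∀ j, μ (s j) ≤ c) : μ (liminf s atTop) ≤ c := by
  have hmono : Monotone fun k => ⋂ j ≥ k, s j :=
    fun _ _ hab => Set.biInter_mono (fun _ hj => hab.trans hj) fun _ _ => le_rfl
  simp only [liminf_eq_iSup_iInf_of_nat, Set.iSup_eq_iUnion, Set.iInf_eq_iInter]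
  rw [hmono.directed_le.measure_iUnion]
  exact iSup_le fun k => (measure_mono (Set.biInter_subset_of_mem le_rfl)).trans (hs k)

theorem Homeomorph.image_subset_liminf_image_of_tendsto_symm {X ι : Type*} [TopologicalSpace X]
    {l : Filter ι} {e : ι → X ≃ₜ X} {f : X ≃ₜ X}
    (hlim : ∀ x, Tendsto (fun j => (e j).symm x) l (𝓝 (f.symm x))) {U : Set X} (hU : IsOpen U) :
    f '' U ⊆ liminf (fun j => e j '' U) l := by
  intro x hx
  rw [f.image_eq_preimage_symm] at hx
  simp only [mem_liminf_iff_eventually_mem, Homeomorph.image_eq_preimage_symm, Set.mem_preimage]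
  exact hlim x (hU.mem_nhds hx)

/-- If `f_j` are self-homeomorphisms, `f_j⁻¹ → f⁻¹` pointwise with `f` a
homeomorphism, and the `f_j` are uniformly absolutely continuous, then `f` is
absolutely continuous. -/
theorem absolutelyContinuous_of_limit
    {X : Type*} [MeasurableSpace X] [TopologicalSpace X]
    (μ : Measure X) (fj : ℕ → X ≃ₜ X) (f : X ≃ₜ X)
    (hlim : ∀ x, Tendsto (fun j => (fj j).symm x) atTop (𝓝 (f.symm x)))
    (hunif : ∀ ε : ℝ≥0∞, 0 < ε → ∃ δ : ℝ≥0∞, 0 < δ ∧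
      ∀ U : Set X, IsOpen U → ∀ j, μ U < δ → μ ((fj j) '' U) < ε) :
    ∀ ε : ℝ≥0∞, 0 < ε → ∃ δ : ℝ≥0∞, 0 < δ ∧
      ∀ U : Set X, IsOpen U → μ U < δ → μ (f '' U) < ε := by
  intro ε hε
  obtain ⟨ε', hε'_pos, hε'_lt⟩ := exists_between hε
  obtain ⟨δ, hδ, hδε'⟩ := hunif ε' hε'_pos
  refine ⟨δ, hδ, fun U hU hμU => ?_⟩
  calc μ (f '' U) ≤ μ (liminf (fun j => fj j '' U) atTop) :=
        measure_mono (f.image_subset_liminf_image_of_tendsto_symm hlim hU)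
    _ ≤ ε' := measure_liminf_atTop_le μ fun j => (hδε' U hU j hμU).le
    _ < ε := hε'_lt
end

section
/- In ℝⁿ, suppose ‖w − v‖ = T, ‖x − v‖ = r, ‖y − w‖ = s, and T ≥ r + s. Let β = ∠(w − v, y − x). Then β ≤ π(r+s)/(2T). -/
/-!
Put `u = w - v` and `z = y - x`, so that `‖z - u‖ ≤ r + s ≤ T = ‖u‖`. This makes `⟪u, z⟫ ≥ 0`,
hence `β ≤ π / 2`. The law of sines in the triangle `0, u, z` gives `T sin β ≤ ‖z - u‖ ≤ r + s`,
and Jordan's inequality `sin β ≥ 2β / π` turns this into the bound on `β`.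
-/

open InnerProductGeometry Real
open scoped RealInnerProductSpace

theorem le_pi_mul_div_of_sin_mul_le {θ T d : ℝ} (hθ₀ : 0 ≤ θ) (hθ : θ ≤ π / 2) (hT : 0 < T)
    (h : sin θ * T ≤ d) : θ ≤ π * d / (2 * T) := by
  rw [le_div_iff₀ (by positivity)]
  calc θ * (2 * T) = π * (2 / π * θ * T) := by field_simp
    _ ≤ π * (sin θ * T) := by gcongr; exact mul_le_sin hθ₀ hθ
    _ ≤ π * d := by gcongr

namespace InnerProductGeometry

variable {V : Type*} [NormedAddCommGroup V] [InnerProductSpace ℝ V]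

theorem angle_le_pi_div_two_of_inner_nonneg {x y : V} (h : 0 ≤ ⟪x, y⟫) : angle x y ≤ π / 2 := by
  rw [angle, arccos_le_pi_div_two]
  positivity

theorem inner_nonneg_of_norm_sub_le_norm {u z : V} (h : ‖z - u‖ ≤ ‖u‖) : 0 ≤ ⟪u, z⟫ := by
  have hsq := norm_sub_sq_real z u
  rw [real_inner_comm] at hsq
  nlinarith [norm_nonneg (z - u), sq_nonneg ‖z‖]

theorem sin_angle_mul_norm_le_norm_sub (u z : V) : sin (angle u z) * ‖u‖ ≤ ‖u - z‖ := by
  rw [sin_angle_mul_norm_eq_sin_angle_mul_norm]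
  exact mul_le_of_le_one_left (norm_nonneg _) (sin_le_one _)

theorem angle_le_of_norm_sub_le_norm {u z : V} (hz : z ≠ 0) (h : ‖z - u‖ ≤ ‖u‖) :
    angle u z ≤ π * ‖z - u‖ / (2 * ‖u‖) := by
  have hu : u ≠ 0 := by
    rintro rfl
    simp_all
  refine le_pi_mul_div_of_sin_mul_le (angle_nonneg u z)
    (angle_le_pi_div_two_of_inner_nonneg (inner_nonneg_of_norm_sub_le_norm h))
    (norm_pos_iff.2 hu) ?_
  rw [norm_sub_rev]
  exact sin_angle_mul_norm_le_norm_sub u z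

end InnerProductGeometry

/-- The "Earth–Moon" angle estimate. -/
theorem angle_le_of_balls {n : ℕ}
    (v w x y : EuclideanSpace ℝ (Fin n)) (T r s : ℝ)
    (hT : ‖w - v‖ = T) (hrr : ‖x - v‖ = r) (hs : ‖y - w‖ = s)
    (hTrs : r + s ≤ T) (hxy : y ≠ x) :
    angle (w - v) (y - x) ≤ π * (r + s) / (2 * T) := by
  have hmoved : ‖(y - x) - (w - v)‖ ≤ r + s :=
    calc ‖(y - x) - (w - v)‖ = ‖(y - w) - (x - v)‖ := by congr 1; abel
      _ ≤ ‖y - w‖ + ‖x - v‖ := norm_sub_le _ _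
      _ = r + s := by rw [hs, hrr, add_comm]
  calc angle (w - v) (y - x) ≤ π * ‖(y - x) - (w - v)‖ / (2 * ‖w - v‖) :=
        angle_le_of_norm_sub_le_norm (sub_ne_zero.2 hxy) (by linarith)
    _ ≤ π * (r + s) / (2 * T) := by
        rw [← hT]
        gcongr
end

section
/- Assume h(v) = A(‖v‖)v, where A : [0,∞) → M^n, each A(r) is nonsingular, and M := sup_r ‖A(r)⁻¹‖ < ∞. Fix ε ∈ (0, π/2) and assume ‖A((1+σ)r) − A(r)‖ < (εσ)/(πM) for all σ, r > 0. Then ‖h(v₁) − h(v₀)‖ ≥ ‖v₁ − v₀‖/(2M) for all v₀, v₁ ∈ ℝⁿ; in particular h is injective. -/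
open Real

/-!
Write `h v = A ‖v‖ v` and assume `‖v₀‖ ≤ ‖v₁‖`. Then
`h v₁ - h v₀ = A ‖v₁‖ (v₁ - v₀) + (A ‖v₁‖ - A ‖v₀‖) v₀`.
The first term has norm at least `‖v₁ - v₀‖ / M`. Taking `σ = (‖v₁‖ - ‖v₀‖) / ‖v₀‖` in the
hypothesis on `A`, the second has norm at most `ε (‖v₁‖ - ‖v₀‖) / (π M) ≤ ‖v₁ - v₀‖ / (2 M)`,
because `ε < π / 2`; the difference of the two bounds is `‖v₁ - v₀‖ / (2 M)`.
-/

section Dilation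

variable {F : Type*} [SeminormedAddCommGroup F] {f : ℝ → F} {K : ℝ}

theorem nonneg_of_norm_dilation_sub_le
    (hf : ∀ σ r : ℝ, 0 < σ → 0 < r → ‖f ((1 + σ) * r) - f r‖ ≤ K * σ) : 0 ≤ K := by
  simpa using (norm_nonneg _).trans (hf 1 1 one_pos one_pos)

theorem mul_norm_sub_le_of_norm_dilation_sub_le
    (hf : ∀ σ r : ℝ, 0 < σ → 0 < r → ‖f ((1 + σ) * r) - f r‖ ≤ K * σ)
    {r₀ r₁ : ℝ} (h₀ : 0 ≤ r₀) (h₀₁ : r₀ ≤ r₁) :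
    r₀ * ‖f r₁ - f r₀‖ ≤ K * (r₁ - r₀) := by
  rcases h₀.eq_or_lt with rfl | h₀
  · simpa using mul_nonneg (nonneg_of_norm_dilation_sub_le hf) h₀₁
  rcases h₀₁.eq_or_lt with rfl | h₀₁
  · simp
  have hσ : 0 < (r₁ - r₀) / r₀ := div_pos (sub_pos.2 h₀₁) h₀
  have hdil : (1 + (r₁ - r₀) / r₀) * r₀ = r₁ := by field_simp; ring
  calc r₀ * ‖f r₁ - f r₀‖ ≤ r₀ * (K * ((r₁ - r₀) / r₀)) := by
        gcongr
        simpa only [hdil] using hf _ _ hσ h₀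
    _ = K * (r₁ - r₀) := by field_simp

end Dilation

theorem ContinuousLinearEquiv.norm_le_mul_norm_apply_of_norm_symm_le {𝕜 E F : Type*}
    [NontriviallyNormedField 𝕜] [SeminormedAddCommGroup E] [SeminormedAddCommGroup F]
    [NormedSpace 𝕜 E] [NormedSpace 𝕜 F] (e : E ≃L[𝕜] F) {M : ℝ}
    (he : ‖(e.symm : F →L[𝕜] E)‖ ≤ M) (x : E) : ‖x‖ ≤ M * ‖e x‖ := by
  simpa using (e.symm : F →L[𝕜] E).le_of_opNorm_le he (e x)

section Radial

variable {𝕜 E F : Type*} [NontriviallyNormedField 𝕜] [SeminormedAddCommGroup E]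
  [SeminormedAddCommGroup F] [NormedSpace 𝕜 E] [NormedSpace 𝕜 F]
  {A : ℝ → E →L[𝕜] F} {M K : ℝ}

theorem norm_sub_div_le_norm_radial_sub_of_norm_le (hM₀ : 0 ≤ M)
    (hM : ∀ r x, ‖x‖ ≤ M * ‖A r x‖)
    (hA : ∀ σ r : ℝ, 0 < σ → 0 < r → ‖A ((1 + σ) * r) - A r‖ ≤ K * σ)
    (hKM : K ≤ (2 * M)⁻¹) {v₀ v₁ : E} (hv : ‖v₀‖ ≤ ‖v₁‖) :
    ‖v₁ - v₀‖ / (2 * M) ≤ ‖A ‖v₁‖ v₁ - A ‖v₀‖ v₀‖ := by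
  have hsplit : A ‖v₁‖ v₁ - A ‖v₀‖ v₀ = A ‖v₁‖ (v₁ - v₀) + (A ‖v₁‖ - A ‖v₀‖) v₀ := by
    simp only [sub_apply, map_sub]
    abel
  have hmain : ‖v₁ - v₀‖ / M ≤ ‖A ‖v₁‖ (v₁ - v₀)‖ :=
    div_le_of_le_mul₀ hM₀ (norm_nonneg _) ((hM _ _).trans_eq (mul_comm _ _))
  have hpert : ‖(A ‖v₁‖ - A ‖v₀‖) v₀‖ ≤ K * ‖v₁ - v₀‖ :=
    calc ‖(A ‖v₁‖ - A ‖v₀‖) v₀‖ ≤ ‖v₀‖ * ‖A ‖v₁‖ - A ‖v₀‖‖ :=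
          ((A ‖v₁‖ - A ‖v₀‖).le_opNorm v₀).trans_eq (mul_comm _ _)
      _ ≤ K * (‖v₁‖ - ‖v₀‖) := mul_norm_sub_le_of_norm_dilation_sub_le hA (norm_nonneg _) hv
      _ ≤ K * ‖v₁ - v₀‖ := by
          have := nonneg_of_norm_dilation_sub_le hA
          gcongr
          exact norm_sub_norm_le v₁ v₀
  rw [hsplit]
  calc ‖v₁ - v₀‖ / (2 * M) = ‖v₁ - v₀‖ / M - (2 * M)⁻¹ * ‖v₁ - v₀‖ := by ring
    _ ≤ ‖A ‖v₁‖ (v₁ - v₀)‖ - ‖(A ‖v₁‖ - A ‖v₀‖) v₀‖ := by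
        gcongr ?_ - ?_
        exact hpert.trans (by gcongr)
    _ ≤ ‖A ‖v₁‖ (v₁ - v₀) + (A ‖v₁‖ - A ‖v₀‖) v₀‖ := norm_sub_le_norm_add _ _

theorem norm_sub_div_le_norm_radial_sub (hM₀ : 0 ≤ M)
    (hM : ∀ r x, ‖x‖ ≤ M * ‖A r x‖)
    (hA : ∀ σ r : ℝ, 0 < σ → 0 < r → ‖A ((1 + σ) * r) - A r‖ ≤ K * σ)
    (hKM : K ≤ (2 * M)⁻¹) (v₀ v₁ : E) :
    ‖v₁ - v₀‖ / (2 * M) ≤ ‖A ‖v₁‖ v₁ - A ‖v₀‖ v₀‖ := by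
  rcases le_total ‖v₀‖ ‖v₁‖ with hv | hv
  · exact norm_sub_div_le_norm_radial_sub_of_norm_le hM₀ hM hA hKM hv
  · rw [norm_sub_rev, norm_sub_rev (A _ _)]
    exact norm_sub_div_le_norm_radial_sub_of_norm_le hM₀ hM hA hKM hv

end Radial

theorem morph_expansion_lower_bound {n : ℕ}
    (A : ℝ → (EuclideanSpace ℝ (Fin n) ≃L[ℝ] EuclideanSpace ℝ (Fin n)))
    (h : EuclideanSpace ℝ (Fin n) → EuclideanSpace ℝ (Fin n))
    (hh : ∀ v, h v = A ‖v‖ v)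
    (M : ℝ) (hM : 0 < M)
    (hMbound : ∀ r : ℝ, ‖((A r).symm : EuclideanSpace ℝ (Fin n) →L[ℝ] EuclideanSpace ℝ (Fin n))‖ ≤ M)
    (ε : ℝ) (hε : ε ∈ Set.Ioo 0 (π / 2))
    (hA : ∀ σ r : ℝ, 0 < σ → 0 < r →
      ‖((A ((1 + σ) * r) : EuclideanSpace ℝ (Fin n) →L[ℝ] EuclideanSpace ℝ (Fin n))
        - (A r : EuclideanSpace ℝ (Fin n) →L[ℝ] EuclideanSpace ℝ (Fin n)))‖ < ε * σ / (π * M)) :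
    (∀ v₀ v₁ : EuclideanSpace ℝ (Fin n), ‖v₁ - v₀‖ / (2 * M) ≤ ‖h v₁ - h v₀‖) ∧
      Function.Injective h := by
  have hA' := fun σ r (hσ : 0 < σ) (hr : 0 < r) =>
    (hA σ r hσ hr).le.trans_eq (div_mul_eq_mul_div ε (π * M) σ).symm
  have hKM : ε / (π * M) ≤ (2 * M)⁻¹ := by
    rw [div_le_iff₀ (by positivity)]
    field_simp
    linarith [hε.2]
  have hbound (v₀ v₁ : EuclideanSpace ℝ (Fin n)) : ‖v₁ - v₀‖ / (2 * M) ≤ ‖h v₁ - h v₀‖ := by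
    simpa only [hh, ContinuousLinearEquiv.coe_coe] using
      norm_sub_div_le_norm_radial_sub
        (A := fun r => (A r : EuclideanSpace ℝ (Fin n) →L[ℝ] EuclideanSpace ℝ (Fin n))) hM.le
        (fun r => (A r).norm_le_mul_norm_apply_of_norm_symm_le (hMbound r)) hA' hKM v₀ v₁
  refine ⟨hbound, fun v₀ v₁ hv => ?_⟩
  have hzero : ‖v₁ - v₀‖ / (2 * M) ≤ 0 := by simpa [hv] using hbound v₀ v₁
  have : ‖v₁ - v₀‖ ≤ 0 := by rwa [div_le_iff₀ (by positivity), zero_mul] at hzero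
  exact (sub_eq_zero.1 (norm_le_zero_iff.1 this)).symm
end

section
/- Let F_θ be the set of C¹ bijections f of ℝⁿ with C¹ inverse, tw(f) < θ, and f(x) = c + x for ‖x‖ ≥ r for some c ∈ ℝⁿ, r > 0. Fix f ∈ F_θ, θ̂ ∈ (tw(f), θ) with θ − θ̂ < π/2, and let g : ℝⁿ → ℝⁿ be C¹ with g(x) = 0 for ‖x‖ ≥ r′ for some r′, and suppose ‖g(v₁) − g(v₀)‖ ≤ (2/π)(θ − θ̂)·‖f(v₁) − f(v₀)‖ for all v₀, v₁ ∈ ℝⁿ. Then f + g ∈ F_θ, and moreover d(f, f+g) ≤ ‖g‖_∞ · max(1, ‖J_{f⁻¹}‖). -/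
/-!
Write `c = 2(θ - θ̂)/π`. A chord of `f + g` is a chord `w` of `f` plus a vector of norm at most
`c‖w‖`, so it makes an angle at most `arcsin c ≤ θ - θ̂` (Jordan's inequality) with `w`; by the
triangle inequality for angles, `tw(f + g) ≤ tw f + θ - θ̂ < θ`.

For invertibility, `f + g = (id + g ∘ f⁻¹) ∘ f` and `g ∘ f⁻¹` is a `c`-contraction, so
`id + g ∘ f⁻¹` is a homeomorphism whose derivative `1 + D(g ∘ f⁻¹)` is everywhere invertible
(Neumann series); its inverse is therefore `C¹`, and so is `(f + g)⁻¹ = f⁻¹ ∘ (id + g ∘ f⁻¹)⁻¹`.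
With `x = (f + g)⁻¹ y`, the difference `f⁻¹ y - (f + g)⁻¹ y = f⁻¹ (f x + g x) - f⁻¹ (f x)` is
bounded by the mean value inequality.
-/

open Real InnerProductGeometry

/-- The twist of a function `f : ℝⁿ → ℝⁿ` (sup of angles between chords). -/
noncomputable def twFun {n : ℕ}
    (f : EuclideanSpace ℝ (Fin n) → EuclideanSpace ℝ (Fin n)) : ℝ :=
  sSup {a | ∃ v₀ v₁ : EuclideanSpace ℝ (Fin n), v₀ ≠ v₁ ∧ f v₀ ≠ f v₁ ∧
    a = angle (v₁ - v₀) (f v₁ - f v₀)}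

/-- `f ∈ F_θ`: a `C¹` bijection with `C¹` inverse, twist `< θ`, equal to a
translation outside a bounded set. -/
def memF {n : ℕ} (θ : ℝ)
    (f : EuclideanSpace ℝ (Fin n) → EuclideanSpace ℝ (Fin n)) : Prop :=
  ContDiff ℝ 1 f ∧
  (∃ g, ContDiff ℝ 1 g ∧ Function.LeftInverse g f ∧ Function.RightInverse g f) ∧
  twFun f < θ ∧
  ∃ r c, 0 < r ∧ ∀ x : EuclideanSpace ℝ (Fin n), r ≤ ‖x‖ → f x = c + x

open Function Set
open scoped NNReal RealInnerProductSpace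

namespace InnerProductGeometry

variable {V : Type*} [NormedAddCommGroup V] [InnerProductSpace ℝ V]

theorem sin_angle_add_mul_norm_le (x y : V) : sin (angle x (x + y)) * ‖x‖ ≤ ‖y‖ := by
  rcases eq_or_ne (x + y) 0 with hxy | hxy
  · have : ‖x‖ = ‖y‖ := by rw [eq_neg_of_add_eq_zero_left hxy, norm_neg]
    nlinarith [sin_le_one (angle x (x + y)), norm_nonneg x]
  have hsin := sin_angle_mul_norm_mul_norm x (x + y)
  -- the Gram determinant of `(x, x + y)` equals that of `(x + y, y)`
  have hgram : ⟪x, x⟫ * ⟪x + y, x + y⟫ - ⟪x, x + y⟫ * ⟪x, x + y⟫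
      = (‖x + y‖ * ‖y‖) ^ 2 - ⟪x + y, y⟫ ^ 2 := by
    simp only [mul_pow, ← real_inner_self_eq_norm_sq, inner_add_left, inner_add_right,
      real_inner_comm x y]
    ring
  have hle : sin (angle x (x + y)) * ‖x‖ * ‖x + y‖ ≤ ‖y‖ * ‖x + y‖ := by
    rw [mul_assoc, hsin, hgram, mul_comm ‖y‖]
    calc √((‖x + y‖ * ‖y‖) ^ 2 - ⟪x + y, y⟫ ^ 2) ≤ √((‖x + y‖ * ‖y‖) ^ 2) :=
          sqrt_le_sqrt (sub_le_self _ (sq_nonneg _))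
      _ = ‖x + y‖ * ‖y‖ := sqrt_sq (by positivity)
  exact le_of_mul_le_mul_right hle (norm_pos_iff.2 hxy)

theorem angle_add_le_arcsin {x y : V} {c : ℝ} (hx : x ≠ 0) (hc : c ≤ 1) (h : ‖y‖ ≤ c * ‖x‖) :
    angle x (x + y) ≤ arcsin c := by
  have hx' : 0 < ‖x‖ := norm_pos_iff.2 hx
  have hinner : 0 ≤ ⟪x, x + y⟫ := by
    rw [inner_add_right, real_inner_self_eq_norm_sq]
    nlinarith [neg_abs_le ⟪x, y⟫, abs_real_inner_le_norm x y]
  have hright : angle x (x + y) ≤ π / 2 :=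
    arccos_le_pi_div_two.2 (div_nonneg hinner (by positivity))
  have hsin : sin (angle x (x + y)) ≤ c :=
    le_of_mul_le_mul_right ((sin_angle_add_mul_norm_le x y).trans h) hx'
  calc angle x (x + y) = arcsin (sin (angle x (x + y))) :=
        (arcsin_sin (by linarith [angle_nonneg x (x + y), pi_pos]) hright).symm
    _ ≤ arcsin c := arcsin_le_arcsin hsin

end InnerProductGeometry

namespace ContractingWith

variable {𝕜 : Type*} [NontriviallyNormedField 𝕜]
  {E : Type*} [NormedAddCommGroup E] [NormedSpace 𝕜 E]
  {u : E → E} {K : ℝ≥0}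

theorem approximatesLinearOn_id_add (hu : ContractingWith K u) :
    ApproximatesLinearOn (fun x ↦ x + u x) (ContinuousLinearMap.id 𝕜 E) univ K := by
  intro x _ y _
  simpa [add_sub_add_comm, ← dist_eq_norm] using hu.2.dist_le_mul x y

variable (𝕜) [CompleteSpace E] in
noncomputable def idAddHomeomorph (hu : ContractingWith K u) : E ≃ₜ E :=
  ApproximatesLinearOn.toHomeomorph (fun x ↦ x + u x) (f' := ContinuousLinearEquiv.refl 𝕜 E)
    hu.approximatesLinearOn_id_add <| by
      rcases subsingleton_or_nontrivial E with h | h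
      · exact .inl h
      · right
        simpa using hu.1

@[simp]
theorem coe_idAddHomeomorph [CompleteSpace E] (hu : ContractingWith K u) :
    ⇑(hu.idAddHomeomorph 𝕜) = fun x ↦ x + u x := rfl

theorem contDiff_idAddHomeomorph_symm [CompleteSpace E] {n : WithTop ℕ∞} (hu : ContractingWith K u)
    (hu' : ContDiff 𝕜 n u) (hn : n ≠ 0) : ContDiff 𝕜 n (hu.idAddHomeomorph 𝕜).symm := by
  have hdiff : Differentiable 𝕜 u := hu'.differentiable hn
  have hsmall (x : E) : ‖-fderiv 𝕜 u x‖ < 1 := by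
    rw [norm_neg]
    exact (norm_fderiv_le_of_lipschitz 𝕜 hu.2).trans_lt (mod_cast hu.1)
  refine (hu.idAddHomeomorph 𝕜).contDiff_symm
    (f₀' := fun x ↦ ContinuousLinearEquiv.unitsEquiv 𝕜 E (Units.oneSub _ (hsmall x)))
    (fun x ↦ ?_) (contDiff_id.add hu')
  convert (hasFDerivAt_id x).add (hdiff x).hasFDerivAt using 1
  · rfl
  · ext v
    simp

end ContractingWith

section Inverse

variable {𝕜 : Type*} [NontriviallyNormedField 𝕜]
  {E : Type*} [NormedAddCommGroup E] [NormedSpace 𝕜 E]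
  {F : Type*} [NormedAddCommGroup F] [NormedSpace 𝕜 F]

theorem exists_contDiff_inverse_add [CompleteSpace F] {n : WithTop ℕ∞} {f g : E → F} {finv : F → E}
    (hfinv : ContDiff 𝕜 n finv) (hl : LeftInverse finv f) (hr : RightInverse finv f)
    (hg : ContDiff 𝕜 n g) (hn : n ≠ 0) {c : ℝ} (hc : c < 1)
    (hlip : ∀ v₀ v₁, ‖g v₁ - g v₀‖ ≤ c * ‖f v₁ - f v₀‖) :
    ∃ k, ContDiff 𝕜 n k ∧ LeftInverse k (f + g) ∧ RightInverse k (f + g) := by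
  have hcontr : ContractingWith c.toNNReal (g ∘ finv) := by
    refine ⟨mod_cast toNNReal_lt_one.2 hc, LipschitzWith.of_dist_le_mul fun y₀ y₁ ↦ ?_⟩
    calc dist (g (finv y₀)) (g (finv y₁)) ≤ c * ‖f (finv y₀) - f (finv y₁)‖ := by
          rw [dist_eq_norm]; exact hlip _ _
      _ ≤ c.toNNReal * dist y₀ y₁ := by
          rw [hr y₀, hr y₁, ← dist_eq_norm]; gcongr; exact le_coe_toNNReal c
  set e := hcontr.idAddHomeomorph 𝕜
  have he : ∀ x, e (f x) = (f + g) x := fun x ↦ by simp [e, hl x]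
  refine ⟨finv ∘ e.symm, hfinv.comp (hcontr.contDiff_idAddHomeomorph_symm (hg.comp hfinv) hn),
    fun x ↦ ?_, fun y ↦ ?_⟩
  · simp [← he, hl x]
  · change (f + g) (finv (e.symm y)) = y
    rw [← he, hr, e.apply_symm_apply]

end Inverse

theorem norm_sub_inverse_add_le {E F : Type*} [NormedAddCommGroup E] [NormedSpace ℝ E]
    [NormedAddCommGroup F] [NormedSpace ℝ F] {f g : E → F} {finv : F → E} {kinv : F → E} {L : ℝ}
    (hfinv : Differentiable ℝ finv) (hL : ∀ y, ‖fderiv ℝ finv y‖ ≤ L)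
    (hl : LeftInverse finv f) (hk : RightInverse kinv (f + g)) (y : F) :
    ‖finv y - kinv y‖ ≤ L * ‖g (kinv y)‖ := by
  set x := kinv y
  have hy : y = f x + g x := (hk y).symm
  calc ‖finv y - kinv y‖ = ‖finv (f x + g x) - finv (f x)‖ := by rw [hl x, ← hy]
    _ ≤ L * ‖(f x + g x) - f x‖ :=
        convex_univ.norm_image_sub_le_of_norm_fderiv_le (fun z _ ↦ hfinv z) (fun z _ ↦ hL z)
          (mem_univ _) (mem_univ _)
    _ = L * ‖g x‖ := by rw [add_sub_cancel_left]

section Twist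

variable {n : ℕ} {f g : EuclideanSpace ℝ (Fin n) → EuclideanSpace ℝ (Fin n)}

theorem angle_le_twFun {v₀ v₁ : EuclideanSpace ℝ (Fin n)} (hv : v₀ ≠ v₁) (hf : f v₀ ≠ f v₁) :
    angle (v₁ - v₀) (f v₁ - f v₀) ≤ twFun f :=
  le_csSup ⟨π, by rintro _ ⟨_, _, _, _, rfl⟩; exact angle_le_pi _ _⟩ ⟨v₀, v₁, hv, hf, rfl⟩

theorem twFun_nonneg : 0 ≤ twFun f :=
  sSup_nonneg (by rintro _ ⟨_, _, _, _, rfl⟩; exact angle_nonneg _ _)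

theorem twFun_le {b : ℝ} (hb : 0 ≤ b)
    (h : ∀ v₀ v₁, v₀ ≠ v₁ → f v₀ ≠ f v₁ → angle (v₁ - v₀) (f v₁ - f v₀) ≤ b) : twFun f ≤ b :=
  Real.sSup_le (by rintro _ ⟨v₀, v₁, hv, hf, rfl⟩; exact h v₀ v₁ hv hf) hb

theorem twFun_add_le {c : ℝ} (hc0 : 0 ≤ c) (hc1 : c ≤ 1)
    (hlip : ∀ v₀ v₁, ‖g v₁ - g v₀‖ ≤ c * ‖f v₁ - f v₀‖) :
    twFun (f + g) ≤ twFun f + arcsin c := by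
  refine twFun_le (add_nonneg twFun_nonneg (arcsin_nonneg.2 hc0)) fun v₀ v₁ hv hfg ↦ ?_
  have hf : f v₀ ≠ f v₁ := by
    intro h
    have hg : g v₁ - g v₀ = 0 := norm_le_zero_iff.1 (by simpa [h] using hlip v₀ v₁)
    exact hfg (by simp [h, (sub_eq_zero.1 hg).symm])
  have hchord : (f + g) v₁ - (f + g) v₀ = (f v₁ - f v₀) + (g v₁ - g v₀) := by
    simp only [Pi.add_apply]; abel
  calc angle (v₁ - v₀) ((f + g) v₁ - (f + g) v₀)
      ≤ angle (v₁ - v₀) (f v₁ - f v₀) + angle (f v₁ - f v₀) ((f + g) v₁ - (f + g) v₀) :=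
        angle_le_angle_add_angle _ _ _
    _ ≤ twFun f + arcsin c := by
        rw [hchord]
        exact add_le_add (angle_le_twFun hv hf)
          (angle_add_le_arcsin (sub_ne_zero.2 hf.symm) hc1 (hlip v₀ v₁))

end Twist

theorem small_change_stays_in_F {n : ℕ} (θ θhat : ℝ)
    (f g : EuclideanSpace ℝ (Fin n) → EuclideanSpace ℝ (Fin n))
    (hf : memF θ f) (hθ1 : twFun f < θhat) (hθ2 : θhat < θ)
    (hθ3 : θ - θhat < π / 2)
    (hg : ContDiff ℝ 1 g)
    (r' : ℝ) (hsupp : ∀ x : EuclideanSpace ℝ (Fin n), r' ≤ ‖x‖ → g x = 0)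
    (hlip : ∀ v₀ v₁ : EuclideanSpace ℝ (Fin n),
      ‖g v₁ - g v₀‖ ≤ (2 / π) * (θ - θhat) * ‖f v₁ - f v₀‖) :
    memF θ (f + g) ∧
    ∀ (finv kinv : EuclideanSpace ℝ (Fin n) → EuclideanSpace ℝ (Fin n)),
      Function.LeftInverse finv f → Function.RightInverse finv f →
      Function.LeftInverse kinv (f + g) → Function.RightInverse kinv (f + g) →
      ∀ (G L : ℝ), (∀ x, ‖g x‖ ≤ G) → (∀ y, ‖fderiv ℝ finv y‖ ≤ L) →
        (∀ x, ‖f x - (f + g) x‖ ≤ G * max 1 L) ∧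
        (∀ y, ‖finv y - kinv y‖ ≤ G * max 1 L) := by
  obtain ⟨hfC, ⟨finv, hfinv, hl, hr⟩, -, r, a, hr0, htrans⟩ := hf
  set c := 2 / π * (θ - θhat) with hc
  have hc0 : 0 ≤ c := mul_nonneg (by positivity) (by linarith)
  have hc1 : c < 1 := by
    calc c < 2 / π * (π / 2) := by rw [hc]; gcongr
      _ = 1 := by field_simp
  have harcsin : arcsin c ≤ θ - θhat := by
    rw [← arcsin_sin (by linarith [pi_pos]) hθ3.le]
    exact arcsin_le_arcsin (mul_le_sin (by linarith) hθ3.le)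
  refine ⟨⟨hfC.add hg, exists_contDiff_inverse_add hfinv hl hr hg one_ne_zero hc1 hlip,
    (twFun_add_le hc0 hc1.le hlip).trans_lt (by linarith), max r r', a,
    lt_max_of_lt_left hr0, fun x hx ↦ ?_⟩, ?_⟩
  · simp [htrans x (le_of_max_le_left hx), hsupp x (le_of_max_le_right hx)]
  intro finv' kinv hl' _ _ hk G L hG hL
  have hG0 : 0 ≤ G := (norm_nonneg _).trans (hG 0)
  have hfinv' : Differentiable ℝ finv' :=
    (hl'.eq_rightInverse hr ▸ hfinv).differentiable one_ne_zero
  refine ⟨fun x ↦ ?_, fun y ↦ ?_⟩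
  · simpa using (hG x).trans (le_mul_of_one_le_right hG0 (le_max_left 1 L))
  · calc ‖finv' y - kinv y‖ ≤ L * ‖g (kinv y)‖ := norm_sub_inverse_add_le hfinv' hL hl' hk y
      _ ≤ max 1 L * G :=
          mul_le_mul (le_max_right 1 L) (hG _) (norm_nonneg _) (zero_le_one.trans (le_max_left 1 L))
      _ = G * max 1 L := mul_comm _ _
end

section
/- There exist ℵ₁-dense sets D, E ⊆ ℝ² such that no bijection f : D → E satisfies tw(f) ≤ π/2. Concretely: let E = Ê × Ê for Ê an ℵ₁-dense subset of ℝ, and D = ⋃_{n∈ω} D̂_n × {y_n} ℵ₁-dense with each D̂_n ⊆ ℝ; then every injection f : D → E with tw(f) ≤ π/2 fails to be surjective. -/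
/-!
Take `E = Ê × Ê` and `D = Ê × ℚ` for an `ℵ₁`-dense `Ê ⊆ ℝ`. If `tw(f) ≤ π/2`, then
`⟪d₁ - d₀, f d₁ - f d₀⟫ ≥ 0`, so along each horizontal line `Ê × {q}` of `D` the first
coordinate of `f` is nondecreasing. A monotone function takes only countably many values
twice, so some `v ∈ Ê` is taken at most once on every line. The vertical line `{v} × Ê ⊆ E`
then receives at most one point from each of the countably many lines of `D`, so it is not
covered by `f`.
-/

open Real InnerProductGeometry Cardinal

/-- `A` is `ℵ₁`-dense: every nonempty open set meets `A` in exactly `ℵ₁` points. -/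
def Aleph1Dense {n : ℕ} (A : Set (EuclideanSpace ℝ (Fin n))) : Prop :=
  ∀ U : Set (EuclideanSpace ℝ (Fin n)), IsOpen U → U.Nonempty →
    #(↥(A ∩ U)) = aleph 1

open Set

lemma InnerProductGeometry.inner_nonneg_of_angle_le_pi_div_two {V : Type*}
    [NormedAddCommGroup V] [InnerProductSpace ℝ V] {x y : V} (h : angle x y ≤ π / 2) :
    0 ≤ inner ℝ x y := by
  rw [← cos_angle_mul_norm_mul_norm]
  exact mul_nonneg (cos_nonneg_of_mem_Icc ⟨by linarith [pi_pos, angle_nonneg x y], h⟩)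
    (by positivity)

lemma MonotoneOn.countable_setOf_not_subsingleton_fiber {S : Set ℝ} {g : ℝ → ℝ}
    (hg : MonotoneOn g S) : {v | ¬ (S ∩ g ⁻¹' {v}).Subsingleton}.Countable := by
  have hpair : ∀ v ∈ {v | ¬ (S ∩ g ⁻¹' {v}).Subsingleton},
      ∃ a b, a ∈ S ∧ b ∈ S ∧ a < b ∧ g a = v ∧ g b = v := by
    intro v hv
    obtain ⟨a, ⟨haS, hav⟩, b, ⟨hbS, hbv⟩, hab⟩ := not_subsingleton_iff.1 hv
    rcases lt_or_gt_of_ne hab with h | h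
    · exact ⟨a, b, haS, hbS, h, hav, hbv⟩
    · exact ⟨b, a, hbS, haS, h, hbv, hav⟩
  choose! a b haS hbS hab hav hbv using hpair
  -- monotonicity makes the intervals `(a v, b v)` pairwise disjoint
  refine PairwiseDisjoint.countable_of_isOpen (s := fun v => Ioo (a v) (b v)) ?_
    (fun _ _ => isOpen_Ioo) fun v hv => nonempty_Ioo.2 (hab v hv)
  intro v hv w hw hvw
  wlog hle : a v ≤ a w generalizing v w
  · exact (this hw hv hvw.symm (le_of_not_ge hle)).symm
  refine disjoint_left.2 fun x hxv hxw => hvw (le_antisymm ?_ ?_)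
  · rw [← hav v hv, ← hav w hw]
    exact hg (haS v hv) (haS w hw) hle
  · rw [← hav w hw, ← hbv v hv]
    exact hg (haS w hw) (hbS v hv) (hxw.1.trans hxv.2).le

noncomputable def pt (x y : ℝ) : EuclideanSpace ℝ (Fin 2) := WithLp.toLp 2 ![x, y]

@[simp] lemma pt_apply_zero (x y : ℝ) : pt x y 0 = x := rfl

lemma pt_injective2 : Function.Injective2 pt := fun _ _ _ _ h =>
  ⟨congrArg (· 0) h, congrArg (· 1) h⟩

lemma continuous_pt_left (y : ℝ) : Continuous (pt · y) := by unfold pt; fun_prop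
lemma continuous_pt_right (x : ℝ) : Continuous (pt x) := by unfold pt; fun_prop

lemma pt_apply_self (p : EuclideanSpace ℝ (Fin 2)) : pt (p 0) (p 1) = p := by
  ext i; fin_cases i <;> rfl

lemma inner_pt_sub_pt (s u y : ℝ) (w : EuclideanSpace ℝ (Fin 2)) :
    inner ℝ (pt u y - pt s y) w = (u - s) * w 0 := by
  simp [pt, PiLp.inner_apply, Fin.sum_univ_two, mul_comm]

lemma monotoneOn_fst_comp_pt {D : Set (EuclideanSpace ℝ (Fin 2))}
    {f : EuclideanSpace ℝ (Fin 2) → EuclideanSpace ℝ (Fin 2)} (hf : InjOn f D)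
    (htw : ∀ d₀ ∈ D, ∀ d₁ ∈ D, d₀ ≠ d₁ → f d₀ ≠ f d₁ → angle (d₁ - d₀) (f d₁ - f d₀) ≤ π / 2)
    {S : Set ℝ} {y : ℝ} (hS : ∀ x ∈ S, pt x y ∈ D) : MonotoneOn (fun x => f (pt x y) 0) S := by
  intro s hs u hu hsu
  rcases hsu.eq_or_lt with rfl | hlt
  · rfl
  have hne : pt s y ≠ pt u y := fun h => hlt.ne (pt_injective2 h).1
  have hinner := inner_nonneg_of_angle_le_pi_div_two
    (htw _ (hS s hs) _ (hS u hu) hne (hf.ne (hS s hs) (hS u hu) hne))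
  rw [inner_pt_sub_pt, PiLp.sub_apply] at hinner
  exact sub_nonneg.1 (nonneg_of_mul_nonneg_right hinner (sub_pos.2 hlt))

/-- Rational affine images of an `ℵ₁`-sized subset of `(0, 1)` reach every open interval. -/
lemma exists_real_subset_aleph1_dense :
    ∃ S : Set ℝ, #S ≤ ℵ₁ ∧ ∀ a b, a < b → ℵ₁ ≤ #↥(S ∩ Ioo a b) := by
  obtain ⟨X, hX01, hX⟩ : ∃ X ⊆ Ioo (0 : ℝ) 1, #X = ℵ₁ :=
    le_mk_iff_exists_subset.1 ((mk_Ioo_real one_pos).symm ▸ aleph_one_le_continuum)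
  refine ⟨range fun p : X × ℚ × ℚ => p.2.1 + p.2.2 * (p.1 : ℝ), mk_range_le.trans ?_, ?_⟩
  · simp [hX]
  intro a b hab
  obtain ⟨q, haq, hqb⟩ := exists_rat_btwn hab
  obtain ⟨r, hr0, hr⟩ := exists_rat_btwn (sub_pos.2 hqb)
  have hr0 : (0 : ℝ) < r := by exact_mod_cast hr0
  have hmaps : MapsTo (fun x : ℝ => q + r * x) X
      (range (fun p : X × ℚ × ℚ => p.2.1 + p.2.2 * (p.1 : ℝ)) ∩ Ioo a b) := by
    intro x hx
    obtain ⟨hx0, hx1⟩ := hX01 hx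
    exact ⟨⟨(⟨x, hx⟩, q, r), rfl⟩, by nlinarith, by nlinarith⟩
  rw [← hX, ← mk_image_eq_of_injOn (fun x : ℝ => q + r * x) X
    fun x _ y _ h => by simpa [hr0.ne'] using h]
  exact mk_le_mk_of_subset hmaps.image_subset

lemma aleph1Dense_image2_pt {S T : Set ℝ} (hS : #S ≤ ℵ₁)
    (hS_Ioo : ∀ a b, a < b → ℵ₁ ≤ #↥(S ∩ Ioo a b)) (hT : #T ≤ ℵ₁) (hT_dense : Dense T) :
    Aleph1Dense (image2 pt S T) := by
  rintro U hU ⟨p, hp⟩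
  refine le_antisymm ((mk_le_mk_of_subset inter_subset_left).trans (mk_image2_le.trans ?_)) ?_
  · calc #S * #T ≤ ℵ₁ * ℵ₁ := mul_le_mul' hS hT
      _ = ℵ₁ := mul_eq_self (aleph0_le_aleph 1)
  obtain ⟨t, htU, htT⟩ := hT_dense.inter_open_nonempty _ (hU.preimage (continuous_pt_right (p 0)))
    ⟨p 1, by simpa [pt_apply_self] using hp⟩
  obtain ⟨a, b, hab, hab_sub⟩ :=
    (hU.preimage (continuous_pt_left t)).exists_Ioo_subset ⟨p 0, htU⟩
  calc ℵ₁ ≤ #↥(S ∩ Ioo a b) := hS_Ioo a b hab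
    _ = #↥((pt · t) '' (S ∩ Ioo a b)) :=
      (mk_image_eq_of_injOn _ _ fun _ _ _ _ h => (pt_injective2 h).1).symm
    _ ≤ #↥(image2 pt S T ∩ U) := mk_le_mk_of_subset <| image_subset_iff.2 fun _ hx =>
      ⟨mem_image2_of_mem hx.1 htT, hab_sub hx.2⟩

lemma countable_of_image_pt_subset_image {S T : Set ℝ} (hT : T.Countable)
    {f : EuclideanSpace ℝ (Fin 2) → EuclideanSpace ℝ (Fin 2)} {v : ℝ}
    (hv : ∀ t ∈ T, (S ∩ (fun x => f (pt x t) 0) ⁻¹' {v}).Subsingleton)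
    (hsub : pt v '' S ⊆ f '' image2 pt S T) : S.Countable := by
  have hpre : ∀ y ∈ S, ∃ x ∈ S, ∃ t ∈ T, f (pt x t) = pt v y := fun y hy => by
    obtain ⟨_, ⟨x, hx, t, ht, rfl⟩, hxt⟩ := hsub (mem_image_of_mem _ hy)
    exact ⟨x, hx, t, ht, hxt⟩
  choose! x hxS t htT hxt using hpre
  refine MapsTo.countable_of_injOn htT (fun y hy y' hy' htt => ?_) hT
  have hx : x y = x y' := hv _ (htT y hy)
    ⟨hxS y hy, by simp [hxt y hy]⟩ ⟨hxS y' hy', by simp [htt, hxt y' hy']⟩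
  exact (pt_injective2 (by rw [← hxt y hy, ← hxt y' hy', hx, htt])).2

/-- There are `ℵ₁`-dense `D, E ⊆ ℝ²` such that no injection `f : D → E` with
`tw(f) ≤ π/2` is surjective onto `E`; in particular no bijection `f : D → E`
has `tw(f) ≤ π/2`. -/
theorem exists_aleph1Dense_no_small_twist_bijection :
    ∃ D E : Set (EuclideanSpace ℝ (Fin 2)), Aleph1Dense D ∧ Aleph1Dense E ∧
      ∀ f : EuclideanSpace ℝ (Fin 2) → EuclideanSpace ℝ (Fin 2),
        Set.InjOn f D → Set.MapsTo f D E →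
        (∀ d₀ ∈ D, ∀ d₁ ∈ D, d₀ ≠ d₁ → f d₀ ≠ f d₁ →
          angle (d₁ - d₀) (f d₁ - f d₀) ≤ π / 2) →
        f '' D ≠ E := by
  obtain ⟨S, hS, hS_Ioo⟩ := exists_real_subset_aleph1_dense
  have hS_Ioo_unc : ∀ a b, a < b → ¬ (S ∩ Ioo a b).Countable := fun a b hab h =>
    (aleph0_lt_aleph_one.trans_le (hS_Ioo a b hab)).not_ge (le_aleph0_iff_set_countable.2 h)
  have hS_unc : ¬ S.Countable := fun h => hS_Ioo_unc 0 1 one_pos (h.mono inter_subset_left)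
  have hS_dense : Dense S := dense_of_exists_between fun a b hab => by
    by_contra! h
    exact hS_Ioo_unc a b hab (countable_empty.mono fun c hc => h c hc.1 hc.2)
  set Q := range ((↑) : ℚ → ℝ)
  refine ⟨image2 pt S Q, image2 pt S S,
    aleph1Dense_image2_pt hS hS_Ioo (mk_range_le.trans (by simp)) Rat.denseRange_cast,
    aleph1Dense_image2_pt hS hS_Ioo hS hS_dense, ?_⟩
  rintro f hf - htw hfD
  have hmono (t : ℝ) (ht : t ∈ Q) : MonotoneOn (fun x => f (pt x t) 0) S :=
    monotoneOn_fst_comp_pt hf htw fun _ hx => mem_image2_of_mem hx ht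
  obtain ⟨v, hvS, hv⟩ : ∃ v ∈ S,
      v ∉ ⋃ t ∈ Q, {v | ¬ (S ∩ (fun x => f (pt x t) 0) ⁻¹' {v}).Subsingleton} :=
    not_subset.1 fun h => hS_unc <| ((countable_range _).biUnion fun t ht =>
      (hmono t ht).countable_setOf_not_subsingleton_fiber).mono h
  refine hS_unc (countable_of_image_pt_subset_image (f := f) (v := v) (countable_range _)
    (fun t ht => ?_) (hfD ▸ image_subset_image2_right hvS))
  simpa using fun h => hv (mem_biUnion ht h)
end
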